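/- Let G be a finite graph of girth greater than 8s + 4 for some integer s ≥ 1, and suppose G has at least one edge. Then bn_s(G) = 2: every depth-s bramble of G has order at most 2, and some depth-s bramble has order exactly 2. -/

import Mathlib

open SimpleGraph

variable {V : Type*}

/-- `B` induces a connected subgraph of `G`. -/
def ConnSet (G : SimpleGraph V) (B : Set V) : Prop := (G.induce B).Connected

/-- `B` induces a subgraph of `G` of radius at most `r`. -/
def RadiusLE (G : SimpleGraph V) (B : Set V) (r : ℕ) : Prop :=
  ∃ u : B, ∀ v : B, (G.induce B).dist u v ≤ r

/-- Two vertex sets touch: they share a vertex or are joined by an edge. -/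
def Touch (G : SimpleGraph V) (A B : Set V) : Prop :=
  (A ∩ B).Nonempty ∨ ∃ a ∈ A, ∃ b ∈ B, G.Adj a b

/-- A depth-`r` bramble. -/
def IsBramble (G : SimpleGraph V) (r : ℕ) (𝓑 : Finset (Set V)) : Prop :=
  (∀ B ∈ 𝓑, ConnSet G B ∧ RadiusLE G B r) ∧ ∀ B ∈ 𝓑, ∀ C ∈ 𝓑, Touch G B C

/-- A bramble with no bound on the radius of its elements. -/
def IsBrambleND (G : SimpleGraph V) (𝓑 : Finset (Set V)) : Prop :=
  (∀ B ∈ 𝓑, ConnSet G B) ∧ ∀ B ∈ 𝓑, ∀ C ∈ 𝓑, Touch G B C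

def IsHittingSet (𝓑 : Finset (Set V)) (X : Finset V) : Prop :=
  ∀ B ∈ 𝓑, ∃ x ∈ X, x ∈ B

/-- The order of a bramble: minimum size of a hitting set. -/
noncomputable def brambleOrder (𝓑 : Finset (Set V)) : ℕ :=
  sInf {n | ∃ X : Finset V, X.card = n ∧ IsHittingSet 𝓑 X}

/-- The depth-`r` bramble number. -/
noncomputable def bn (G : SimpleGraph V) (r : ℕ) : ℕ :=
  sSup {n | ∃ 𝓑 : Finset (Set V), IsBramble G r 𝓑 ∧ brambleOrder 𝓑 = n}

/-- A depth-`r` `t`-bramble: any `t` (not necessarily distinct) elements intersect. -/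
def IsTBramble (G : SimpleGraph V) (r t : ℕ) (𝓑 : Finset (Set V)) : Prop :=
  IsBramble G r 𝓑 ∧ ∀ f : Fin t → Set V, (∀ i, f i ∈ 𝓑) → (⋂ i, f i).Nonempty

/-- The depth-`r` `t`-bramble number. -/
noncomputable def bnT (G : SimpleGraph V) (r t : ℕ) : ℕ :=
  sSup {n | ∃ 𝓑 : Finset (Set V), IsTBramble G r t 𝓑 ∧ brambleOrder 𝓑 = n}

/-- A depth-`r` tangle. -/
def IsTangle (G : SimpleGraph V) (r : ℕ) (𝓑 : Finset (Set V)) : Prop :=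
  IsBramble G r 𝓑 ∧ ∀ T₁ ∈ 𝓑, ∀ T₂ ∈ 𝓑, ∀ T₃ ∈ 𝓑,
    (T₁ ∩ T₂ ∩ T₃).Nonempty ∨
      ∃ a b : V, G.Adj a b ∧ (a ∈ T₁ ∨ b ∈ T₁) ∧ (a ∈ T₂ ∨ b ∈ T₂) ∧ (a ∈ T₃ ∨ b ∈ T₃)

/-- The depth-`r` tangle number. -/
noncomputable def tn (G : SimpleGraph V) (r : ℕ) : ℕ :=
  sSup {n | ∃ 𝓑 : Finset (Set V), IsTangle G r 𝓑 ∧ brambleOrder 𝓑 = n}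

/-- The set of vertices strongly `k`-reachable from `v` w.r.t. the linear order
given by the embedding `π : V ↪ ℕ`. -/
def SReach (G : SimpleGraph V) (π : V ↪ ℕ) (k : ℕ) (v : V) : Set V :=
  {u | π u ≤ π v ∧ ∃ p : G.Walk v u, p.IsPath ∧ p.length ≤ k ∧
    ∀ w ∈ p.support, w ≠ v → w ≠ u → π v < π w}

/-- The strong `k`-coloring number. -/
noncomputable def scol (G : SimpleGraph V) (k : ℕ) : ℕ :=
  sInf {n | ∃ π : V ↪ ℕ, ∀ v : V, (SReach G π k v).ncard ≤ n}

/-- A depth-`r` minor-model of `H` in `G`. -/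
def IsMinorModel {W : Type*} (G : SimpleGraph V) (H : SimpleGraph W) (r : ℕ)
    (M : W → Set V) : Prop :=
  (∀ w, ConnSet G (M w) ∧ RadiusLE G (M w) r) ∧
  (Pairwise fun w w' => Disjoint (M w) (M w')) ∧
  ∀ ⦃w w'⦄, H.Adj w w' → ∃ a ∈ M w, ∃ b ∈ M w', G.Adj a b

/-- `ω_r(G)`: the largest `t` such that `K_t` is a depth-`r` minor of `G`. -/
noncomputable def cliqueMinorNum (G : SimpleGraph V) (r : ℕ) : ℕ :=
  sSup {t | ∃ M : Fin t → Set V, IsMinorModel G (⊤ : SimpleGraph (Fin t)) r M}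

/-- `grid_r(G)`: the largest `t` such that the `t × t` grid is a depth-`r` minor of `G`. -/
noncomputable def gridMinorNum (G : SimpleGraph V) (r : ℕ) : ℕ :=
  sSup {t | ∃ M : Fin t × Fin t → Set V,
    IsMinorModel G (SimpleGraph.pathGraph t □ SimpleGraph.pathGraph t) r M}

/-- `S` is depth-`r` `k`-linked. -/
def IsLinkedSet (G : SimpleGraph V) (r k : ℕ) (S : Set V) : Prop :=
  ∀ X : Finset V, X.card < k →
    ∃ B : Set V, (∀ x ∈ X, x ∉ B) ∧ ConnSet G B ∧ RadiusLE G B r ∧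
      S.ncard < 2 * (S ∩ B).ncard

/-- The depth-`r` linkedness of `G`. -/
noncomputable def linkNum (G : SimpleGraph V) (r : ℕ) : ℕ :=
  sSup {k | ∃ S : Set V, IsLinkedSet G r k S}

/-- `S` is depth-`r` well-linked. -/
def IsWellLinkedSet (G : SimpleGraph V) (r : ℕ) (S : Set V) : Prop :=
  ∀ A B : Finset V, ↑A ⊆ S → ↑B ⊆ S → A.card = B.card →
    ∀ Y : Finset V, Y.card < A.card →
      ∃ (a b : V) (p : G.Walk a b), a ∈ A ∧ b ∈ B ∧ p.IsPath ∧ p.length ≤ r ∧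
        ∀ w ∈ p.support, w ∉ Y

/-- The depth-`r` well-linkedness of `G`. -/
noncomputable def wellNum (G : SimpleGraph V) (r : ℕ) : ℕ :=
  sSup {n | ∃ S : Set V, IsWellLinkedSet G r S ∧ S.ncard = n}


/-!
Let `U` be the union of the elements of a depth-`s` bramble. Any two vertices of `U` are joined
by a walk of length at most `4s + 1`, so a cycle through `U`, cut at distance `4s + 2` along
itself and closed up by such a walk, would leave a cycle of length at most `8s + 3` in `G`.
Hence the edges of `G` inside `U` form a forest, in which the bramble is still a bramble.
Connected vertex sets of a forest have the Helly property, so the closed neighbourhoods of the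
bramble elements share a vertex `x`; every element missing `x` contains a neighbour of `x`, and
that neighbour is the same for all of them. An edge `ab` gives the bramble `{{a}, {b}}` of
order `2`.
-/

namespace SimpleGraph

variable {G T : SimpleGraph V}

lemma preconnected_induce_iff_exists_walk {S : Set V} :
    (G.induce S).Preconnected ↔ ∀ a ∈ S, ∀ b ∈ S, ∃ p : G.Walk a b, ∀ x ∈ p.support, x ∈ S := by
  refine ⟨fun h a ha b hb => ?_, fun h a b => ?_⟩
  · obtain ⟨p⟩ := h ⟨a, ha⟩ ⟨b, hb⟩
    refine ⟨p.map (Embedding.induce S).toHom, fun x hx => ?_⟩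
    change x ∈ (p.map (Embedding.induce S).toHom).support at hx
    rw [Walk.support_map] at hx
    obtain ⟨y, -, rfl⟩ := List.mem_map.mp hx
    exact y.2
  · obtain ⟨p, hp⟩ := h a a.2 b b.2
    exact ⟨p.induce S hp⟩

lemma exists_isPath_of_preconnected_induce {S : Set V} (hS : (G.induce S).Preconnected)
    {a b : V} (ha : a ∈ S) (hb : b ∈ S) :
    ∃ p : G.Walk a b, p.IsPath ∧ ∀ x ∈ p.support, x ∈ S := by
  classical
  obtain ⟨p, hp⟩ := preconnected_induce_iff_exists_walk.mp hS a ha b hb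
  exact ⟨p.bypass, p.bypass_isPath, fun x hx => hp x (p.support_bypass_subset_support hx)⟩

lemma preconnected_induce_union_of_touch {B C : Set V} (hBC : Touch G B C)
    (hB : (G.induce B).Preconnected) (hC : (G.induce C).Preconnected) :
    (G.induce (B ∪ C)).Preconnected := by
  rcases hBC with hBC | ⟨b, hb, c, hc, hbc⟩
  · exact (induce_union_connected hB hC hBC).preconnected
  · exact (connected_induce_union hB hC hb hc hbc).preconnected

lemma IsAcyclic.support_subset_of_preconnected_induce (hT : T.IsAcyclic) {S : Set V}
    (hS : (T.induce S).Preconnected) {a b : V} (ha : a ∈ S) (hb : b ∈ S) {p : T.Walk a b}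
    (hp : p.IsPath) : ∀ x ∈ p.support, x ∈ S := by
  obtain ⟨q, hq, hqS⟩ := exists_isPath_of_preconnected_induce hS ha hb
  obtain rfl : p = q := congrArg Subtype.val ((hT.subsingleton_path a b).elim ⟨p, hp⟩ ⟨q, hq⟩)
  exact hqS

lemma IsAcyclic.preconnected_induce_inter (hT : T.IsAcyclic) {S S' : Set V}
    (hS : (T.induce S).Preconnected) (hS' : (T.induce S').Preconnected) :
    (T.induce (S ∩ S')).Preconnected := by
  refine preconnected_induce_iff_exists_walk.mpr fun a ha b hb => ?_
  obtain ⟨p, hp, hpS⟩ := exists_isPath_of_preconnected_induce hS ha.1 hb.1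
  exact ⟨p, fun x hx => ⟨hpS x hx, hT.support_subset_of_preconnected_induce hS' ha.2 hb.2 hp x hx⟩⟩

lemma IsAcyclic.eq_of_adj_of_adj (hT : T.IsAcyclic) {S : Set V} (hS : (T.induce S).Preconnected)
    {x y y' : V} (hx : x ∉ S) (hy : y ∈ S) (hy' : y' ∈ S) (hxy : T.Adj x y) (hxy' : T.Adj x y') :
    y = y' := by
  by_contra hne
  obtain ⟨p, hp, hpS⟩ := exists_isPath_of_preconnected_induce hS hy hy'
  refine hx (hpS x (hT.mem_support_of_ne_mem_support_of_adj_of_isPath hp (.of_adj hxy.symm)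
    hxy'.symm ?_))
  simp [Ne.symm hne, hxy'.ne.symm]

lemma IsAcyclic.mem_or_mem_of_adj (hT : T.IsAcyclic) {S S' : Set V}
    (hS : (T.induce S).Preconnected) (hS' : (T.induce S').Preconnected) {b x y : V}
    (hb : b ∈ S ∩ S') (hx : x ∈ S) (hy : y ∈ S') (hxy : T.Adj x y) : x ∈ S' ∨ y ∈ S := by
  by_contra! h
  obtain ⟨p, hp, hpS⟩ := exists_isPath_of_preconnected_induce hS hb.1 hx
  obtain ⟨q, hq, hqS'⟩ := exists_isPath_of_preconnected_induce hS' hb.2 hy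
  exact h.2 (hpS y (hT.mem_support_of_ne_mem_support_of_adj_of_isPath hp hq hxy
    fun hxq => h.1 (hqS' x hxq)))

lemma IsAcyclic.inter_inter_nonempty (hT : T.IsAcyclic) {S₁ S₂ S₃ : Set V}
    (h₁ : (T.induce S₁).Preconnected) (h₂ : (T.induce S₂).Preconnected)
    (h₃ : (T.induce S₃).Preconnected) (h₁₂ : (S₁ ∩ S₂).Nonempty) (h₂₃ : (S₂ ∩ S₃).Nonempty)
    (h₁₃ : (S₁ ∩ S₃).Nonempty) : (S₁ ∩ S₂ ∩ S₃).Nonempty := by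
  classical
  obtain ⟨a, ha₁, ha₂⟩ := h₁₂
  obtain ⟨b, hb₂, hb₃⟩ := h₂₃
  obtain ⟨c, hc₁, hc₃⟩ := h₁₃
  by_cases hc₂ : c ∈ S₂
  · exact ⟨c, ⟨hc₁, hc₂⟩, hc₃⟩
  obtain ⟨p, hpS₂⟩ := preconnected_induce_iff_exists_walk.mp h₂ a ha₂ b hb₂
  obtain ⟨q, hqS₃⟩ := preconnected_induce_iff_exists_walk.mp h₃ b hb₃ c hc₃
  -- the unique path from `a` to `c` lies in `S₁` and, being a bypass of `p.append q`, in `S₂ ∪ S₃`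
  set r := (p.append q).bypass
  have hr₁ := hT.support_subset_of_preconnected_induce h₁ ha₁ hc₁ (p.append q).bypass_isPath
  have hr₂₃ : ∀ x ∈ r.support, x ∈ S₂ ∨ x ∈ S₃ := fun x hx => by
    rcases (Walk.mem_support_append_iff _ _).mp
      ((p.append q).support_bypass_subset_support hx) with h | h
    exacts [.inl (hpS₂ x h), .inr (hqS₃ x h)]
  obtain ⟨d, hd, hd₂, hd₂'⟩ := r.exists_boundary_dart S₂ ha₂ hc₂
  have hd₃ := (hr₂₃ _ (r.dart_snd_mem_support_of_mem_darts hd)).resolve_left hd₂'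
  rcases hT.mem_or_mem_of_adj h₂ h₃ ⟨hb₂, hb₃⟩ hd₂ hd₃ d.adj with h | h
  · exact ⟨d.fst, ⟨hr₁ _ (r.dart_fst_mem_support_of_mem_darts hd), hd₂⟩, h⟩
  · exact absurd h hd₂'

lemma IsAcyclic.exists_mem_forall_mem (hT : T.IsAcyclic) {A : Set V}
    (hA : (T.induce A).Preconnected) (hA₀ : A.Nonempty) (𝓕 : Finset (Set V))
    (h𝓕 : ∀ S ∈ 𝓕, (T.induce S).Preconnected) (hA𝓕 : ∀ S ∈ 𝓕, (A ∩ S).Nonempty)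
    (h𝓕𝓕 : ∀ S ∈ 𝓕, ∀ S' ∈ 𝓕, (S ∩ S').Nonempty) : ∃ x ∈ A, ∀ S ∈ 𝓕, x ∈ S := by
  classical
  induction 𝓕 using Finset.induction_on generalizing A with
  | empty => exact hA₀.imp fun x hx => ⟨hx, by simp⟩
  | insert S 𝓕 _ ih =>
    simp only [Finset.mem_insert, forall_eq_or_imp] at h𝓕 hA𝓕 h𝓕𝓕 ⊢
    obtain ⟨x, ⟨hxA, hxS⟩, hx⟩ := ih (hT.preconnected_induce_inter hA h𝓕.1) hA𝓕.1 h𝓕.2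
      (fun S' hS' => hT.inter_inter_nonempty hA h𝓕.1 (h𝓕.2 S' hS') hA𝓕.1 (h𝓕𝓕.1.2 S' hS')
        (hA𝓕.2 S' hS'))
      fun S' hS' S'' hS'' => (h𝓕𝓕.2 S' hS').2 S'' hS''
    exact ⟨x, hxA, hxS, hx⟩

def closedNbhd (G : SimpleGraph V) (B : Set V) : Set V := B ∪ {y | ∃ b ∈ B, G.Adj y b}

lemma subset_closedNbhd (B : Set V) : B ⊆ G.closedNbhd B := Set.subset_union_left

lemma preconnected_induce_closedNbhd {B : Set V} (hB : (G.induce B).Preconnected) :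
    (G.induce (G.closedNbhd B)).Preconnected := by
  have hstep : ∀ a ∈ G.closedNbhd B, ∃ a' ∈ B, ∃ p : G.Walk a a',
      ∀ x ∈ p.support, x ∈ G.closedNbhd B := by
    rintro a (ha | ⟨a', ha', haa'⟩)
    · exact ⟨a, ha, .nil, by simpa using subset_closedNbhd B ha⟩
    · refine ⟨a', ha', haa'.toWalk, ?_⟩
      simp only [Walk.support_cons, Walk.support_nil, List.mem_cons, List.not_mem_nil, or_false,
        forall_eq_or_imp, forall_eq]
      exact ⟨.inr ⟨a', ha', haa'⟩, .inl ha'⟩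
  refine preconnected_induce_iff_exists_walk.mpr fun a ha b hb => ?_
  obtain ⟨a', ha', p, hp⟩ := hstep a ha
  obtain ⟨b', hb', q, hq⟩ := hstep b hb
  obtain ⟨r, hr⟩ := preconnected_induce_iff_exists_walk.mp hB a' ha' b' hb'
  refine ⟨p.append (r.append q.reverse), fun x hx => ?_⟩
  simp only [Walk.mem_support_append_iff, Walk.support_reverse, List.mem_reverse] at hx
  rcases hx with hx | hx | hx
  exacts [hp x hx, subset_closedNbhd B (hr x hx), hq x hx]

lemma Touch.closedNbhd_inter_nonempty {B C : Set V} (h : Touch G B C) :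
    (G.closedNbhd B ∩ G.closedNbhd C).Nonempty := by
  rcases h with ⟨t, htB, htC⟩ | ⟨b, hb, c, hc, hbc⟩
  exacts [⟨t, .inl htB, .inl htC⟩, ⟨b, .inl hb, .inr ⟨c, hc, hbc⟩⟩]

theorem Walk.IsCycle.girth_le_two_mul_add_one {v : V} {c : G.Walk v v} (hc : c.IsCycle) {d : ℕ}
    (hd : ∀ u ∈ c.support, ∃ p : G.Walk v u, p.length ≤ d) : G.girth ≤ 2 * d + 1 := by
  classical
  by_cases hlen : c.length ≤ 2 * d + 1
  · exact (girth_le_length hc).trans hlen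
  obtain ⟨q, hq⟩ := hd _ (c.getVert_mem_support (d + 1))
  have harc : (c.take (d + 1)).length = d + 1 := by rw [Walk.take_length]; omega
  have hne : c.take (d + 1) ≠ q.bypass := fun h => by
    have := q.length_bypass_le_length
    rw [← h] at this
    omega
  obtain ⟨w, -, -, c', hc', hlen'⟩ :=
    (hc.isPath_take (by omega)).exists_isCycle_length_le_add_of_ne q.bypass_isPath hne
  have := q.length_bypass_le_length
  exact (girth_le_length hc').trans (by omega)

end SimpleGraph

open SimpleGraph

lemma exists_walk_length_le_of_radiusLE {G : SimpleGraph V} {B : Set V} {r : ℕ}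
    (hB : ConnSet G B) (hr : RadiusLE G B r) {a b : V} (ha : a ∈ B) (hb : b ∈ B) :
    ∃ p : G.Walk a b, p.length ≤ 2 * r := by
  obtain ⟨u, hu⟩ := hr
  obtain ⟨p, hp⟩ := hB.exists_walk_length_eq_dist ⟨a, ha⟩ ⟨b, hb⟩
  have hab : (G.induce B).dist ⟨a, ha⟩ ⟨b, hb⟩ ≤ 2 * r := calc
    _ ≤ (G.induce B).dist ⟨a, ha⟩ u + (G.induce B).dist u ⟨b, hb⟩ := hB.dist_triangle
    _ ≤ r + r := add_le_add (dist_comm.trans_le (hu _)) (hu _)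
    _ = 2 * r := (two_mul r).symm
  exact ⟨p.map (Embedding.induce B).toHom, (Walk.length_map _ p).trans_le (hp ▸ hab)⟩

lemma brambleOrder_le_card {𝓑 : Finset (Set V)} {X : Finset V} (hX : IsHittingSet 𝓑 X) :
    brambleOrder 𝓑 ≤ X.card :=
  Nat.sInf_le ⟨X, rfl, hX⟩

theorem brambleOrder_le_two_of_isAcyclic {T : SimpleGraph V} (hT : T.IsAcyclic)
    {𝓑 : Finset (Set V)} (h𝓑 : IsBrambleND T 𝓑) : brambleOrder 𝓑 ≤ 2 := by
  classical
  obtain rfl | ⟨B₀, hB₀⟩ := 𝓑.eq_empty_or_nonempty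
  · exact (brambleOrder_le_card (X := ∅) (by simp [IsHittingSet])).trans (by simp)
  have hconn : ∀ B ∈ 𝓑, (T.induce B).Preconnected := fun B hB => (h𝓑.1 B hB).preconnected
  obtain ⟨⟨y₀, hy₀⟩⟩ := (h𝓑.1 B₀ hB₀).nonempty
  obtain ⟨x, -, hx⟩ := hT.exists_mem_forall_mem (preconnected_induce_closedNbhd (hconn B₀ hB₀))
    ⟨y₀, subset_closedNbhd B₀ hy₀⟩ (𝓑.image T.closedNbhd)
    (by simpa using fun B hB => preconnected_induce_closedNbhd (hconn B hB))
    (by simpa using fun B hB => (h𝓑.2 B₀ hB₀ B hB).closedNbhd_inter_nonempty)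
    (by simpa using fun B hB C hC => (h𝓑.2 B hB C hC).closedNbhd_inter_nonempty)
  simp only [Finset.mem_image, forall_exists_index, and_imp, forall_apply_eq_imp_iff₂] at hx
  by_cases hall : ∀ B ∈ 𝓑, x ∈ B
  · exact (brambleOrder_le_card (X := {x}) fun B hB => ⟨x, by simp, hall B hB⟩).trans (by simp)
  obtain ⟨B₁, hB₁, hxB₁⟩ := not_forall₂.mp hall
  obtain ⟨y₁, hy₁, hxy₁⟩ := (hx B₁ hB₁).resolve_left hxB₁
  refine (brambleOrder_le_card fun B hB => ?_).trans (Finset.card_le_two (a := x) (b := y₁))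
  by_cases hxB : x ∈ B
  · exact ⟨x, by simp, hxB⟩
  obtain ⟨y, hy, hxy⟩ := (hx B hB).resolve_left hxB
  have hyy₁ : y = y₁ := hT.eq_of_adj_of_adj
    (preconnected_induce_union_of_touch (h𝓑.2 B hB B₁ hB₁) (hconn B hB) (hconn B₁ hB₁))
    (by simp [hxB, hxB₁]) (.inl hy) (.inr hy₁) hxy hxy₁
  exact ⟨y₁, by simp, hyy₁ ▸ hy⟩

section Bramble

variable {G : SimpleGraph V} {r : ℕ} {𝓑 : Finset (Set V)}

lemma IsBramble.exists_walk_length_le (h : IsBramble G r 𝓑) {B C : Set V} (hB : B ∈ 𝓑)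
    (hC : C ∈ 𝓑) {a b : V} (ha : a ∈ B) (hb : b ∈ C) : ∃ p : G.Walk a b, p.length ≤ 4 * r + 1 := by
  have hwalk : ∀ {B}, B ∈ 𝓑 → ∀ {a b}, a ∈ B → b ∈ B → ∃ p : G.Walk a b, p.length ≤ 2 * r :=
    fun hB => exists_walk_length_le_of_radiusLE (h.1 _ hB).1 (h.1 _ hB).2
  rcases h.2 B hB C hC with ⟨t, htB, htC⟩ | ⟨x, hx, y, hy, hxy⟩
  · obtain ⟨p, hp⟩ := hwalk hB ha htB
    obtain ⟨q, hq⟩ := hwalk hC htC hb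
    exact ⟨p.append q, by rw [Walk.length_append]; omega⟩
  · obtain ⟨p, hp⟩ := hwalk hB ha hx
    obtain ⟨q, hq⟩ := hwalk hC hy hb
    exact ⟨p.append (q.cons hxy), by rw [Walk.length_append, Walk.length_cons]; omega⟩

theorem IsBramble.isAcyclic_spanningCoe_induce (h : IsBramble G r 𝓑)
    (hg : 8 * r + 3 < G.girth) :
    ((⊤ : G.Subgraph).induce (⋃ B ∈ 𝓑, B)).spanningCoe.IsAcyclic := by
  intro v c hc
  have hU : ∀ u ∈ c.support, u ∈ ⋃ B ∈ 𝓑, B := fun u hu => by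
    obtain ⟨w, -, huw⟩ := adj_of_mem_walk_support c hc.not_nil hu
    simp only [Subgraph.spanningCoe_adj, Subgraph.induce_adj] at huw
    exact huw.1
  have := (hc.mapLe (Subgraph.spanningCoe_le _)).girth_le_two_mul_add_one (d := 4 * r + 1)
    fun u hu => by
      rw [Walk.support_mapLe_eq_support] at hu
      obtain ⟨B, hB, hvB⟩ := Set.mem_iUnion₂.mp (hU v c.start_mem_support)
      obtain ⟨C, hC, huC⟩ := Set.mem_iUnion₂.mp (hU u hu)
      exact h.exists_walk_length_le hB hC hvB huC
  omega

theorem IsBramble.isBrambleND_spanningCoe_induce (h : IsBramble G r 𝓑) :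
    IsBrambleND ((⊤ : G.Subgraph).induce (⋃ B ∈ 𝓑, B)).spanningCoe 𝓑 := by
  have hsub : ∀ B ∈ 𝓑, B ⊆ ⋃ B ∈ 𝓑, B := fun B hB => Set.subset_iUnion₂ (s := fun B _ => B) B hB
  refine ⟨fun B hB => ?_, fun B hB C hC => ?_⟩
  · have hind : ((⊤ : G.Subgraph).induce (⋃ B ∈ 𝓑, B)).spanningCoe.induce B = G.induce B := by
      ext ⟨a, ha⟩ ⟨b, hb⟩
      simp [hsub B hB ha, hsub B hB hb]
    unfold ConnSet
    rw [hind]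
    exact (h.1 B hB).1
  · rcases h.2 B hB C hC with hBC | ⟨a, ha, b, hb, hab⟩
    · exact .inl hBC
    · exact .inr ⟨a, ha, b, hb, by simp [hsub B hB ha, hsub C hC hb, hab]⟩

theorem IsBramble.brambleOrder_le_two (h : IsBramble G r 𝓑) (hg : 8 * r + 3 < G.girth) :
    brambleOrder 𝓑 ≤ 2 :=
  brambleOrder_le_two_of_isAcyclic (h.isAcyclic_spanningCoe_induce hg)
    h.isBrambleND_spanningCoe_induce

end Bramble

lemma isBramble_pair_of_adj {G : SimpleGraph V} {a b : V} (hab : G.Adj a b) (r : ℕ) :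
    IsBramble G r {{a}, {b}} := by
  have hsingle : ∀ v : V, ConnSet G {v} ∧ RadiusLE G {v} r := fun v =>
    ⟨by simp [ConnSet], ⟨⟨v, rfl⟩, fun w => by simp [Subsingleton.elim w ⟨v, rfl⟩]⟩⟩
  refine ⟨by simp [hsingle], ?_⟩
  simp [Touch, hab, hab.symm]

lemma brambleOrder_pair {a b : V} (hab : a ≠ b) :
    brambleOrder ({{a}, {b}} : Finset (Set V)) = 2 := by
  classical
  have hhit : IsHittingSet {{a}, {b}} {a, b} := by simp [IsHittingSet]
  refine le_antisymm ((brambleOrder_le_card hhit).trans Finset.card_le_two)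
    (le_csInf ⟨_, _, rfl, hhit⟩ ?_)
  rintro n ⟨X, rfl, hX⟩
  have hsub : {a, b} ⊆ X := by simpa [Finset.insert_subset_iff, IsHittingSet] using hX
  exact (Finset.card_pair hab).symm.le.trans (Finset.card_le_card hsub)

theorem bn_eq_two_of_large_girth_general {V : Type*} (G : SimpleGraph V) (s : ℕ)
    (hgirth : ((8 * s + 4 : ℕ) : ℕ∞) < G.girth) (hedge : ∃ a b : V, G.Adj a b) :
    (∀ 𝓑 : Finset (Set V), IsBramble G s 𝓑 → brambleOrder 𝓑 ≤ 2) ∧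
    (∃ 𝓑 : Finset (Set V), IsBramble G s 𝓑 ∧ brambleOrder 𝓑 = 2) ∧
    bn G s = 2 := by
  obtain ⟨a, b, hab⟩ := hedge
  have hg : 8 * s + 3 < G.girth := by
    have := Nat.cast_lt.mp hgirth
    omega
  have hle : ∀ 𝓑 : Finset (Set V), IsBramble G s 𝓑 → brambleOrder 𝓑 ≤ 2 :=
    fun 𝓑 h => h.brambleOrder_le_two hg
  have hpair : IsBramble G s {{a}, {b}} ∧ brambleOrder ({{a}, {b}} : Finset (Set V)) = 2 :=
    ⟨isBramble_pair_of_adj hab s, brambleOrder_pair hab.ne⟩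
  refine ⟨hle, ⟨_, hpair⟩, IsGreatest.csSup_eq ⟨⟨_, hpair⟩, ?_⟩⟩
  rintro n ⟨𝓑, h𝓑, rfl⟩
  exact hle 𝓑 h𝓑

/-- a graph with an edge and girth greater than `8s+4` has `bn_s(G) = 2`:
every depth-`s` bramble has order at most `2`, some depth-`s` bramble has order exactly `2`. -/
theorem bn_eq_two_of_large_girth {V : Type*} [Fintype V] (G : SimpleGraph V) (s : ℕ)
    (hs : 1 ≤ s) (hgirth : ((8 * s + 4 : ℕ) : ℕ∞) < G.girth) (hedge : ∃ a b : V, G.Adj a b) :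
    (∀ 𝓑 : Finset (Set V), IsBramble G s 𝓑 → brambleOrder 𝓑 ≤ 2) ∧
    (∃ 𝓑 : Finset (Set V), IsBramble G s 𝓑 ∧ brambleOrder 𝓑 = 2) ∧
    bn G s = 2 :=
  bn_eq_two_of_large_girth_general G s hgirth hedge
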